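/- arXiv:2411.08927 — 2 statements merged into one kernel-verified Lean document; each statement's English description precedes it below -/
import Mathlib

section
/- The 4×4 matrix ρ^{T_B} obtained by partial transpose (on the second qubit) of the thermal state ρ = e^{−βH}/Z has eigenvalues cosh(βα)/Z (with multiplicity 2) and (1 + e^{2βB} ± √(1 − 4e^{2βB} + e^{4βB} + 2e^{2βB}cosh(2βα)))/(2Z e^{βB}), where Z = 2(cosh(βα)+cosh(βB)). -/
/-!
Reordering the basis as |00⟩, |11⟩, |01⟩, |10⟩ makes ρ^{T_B} block diagonal. The |01⟩, |10⟩
block is cosh(βα)/Z times the identity, giving the double eigenvalue. The |00⟩, |11⟩ block is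
Z⁻¹ [[e^{-βB}, -sinh βα], [-sinh βα, e^{βB}]], whose eigenvalues come from the quadratic formula:
its discriminant is ((e^{2βB} - 1)² + 4 e^{2βB} sinh² βα) / (Z e^{βB})², and the numerator is the
radicand of the statement rewritten as a sum of squares.
-/

open Polynomial

noncomputable section

/-- Partial transpose (on the second qubit) of the two-qubit thermal state, in the
    standard basis {|00⟩,|01⟩,|10⟩,|11⟩}. -/
def ρTB (β B α : ℝ) : Matrix (Fin 4) (Fin 4) ℂ :=
  ((2 * (Real.cosh (β * α) + Real.cosh (β * B)) : ℝ) : ℂ)⁻¹ •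
    !![((Real.exp (-(β * B)) : ℝ) : ℂ), 0, 0, ((-(Real.sinh (β * α)) : ℝ) : ℂ);
       0, ((Real.cosh (β * α) : ℝ) : ℂ), 0, 0;
       0, 0, ((Real.cosh (β * α) : ℝ) : ℂ), 0;
       ((-(Real.sinh (β * α)) : ℝ) : ℂ), 0, 0, ((Real.exp (β * B) : ℝ) : ℂ)]

namespace Matrix

theorem charpoly_xMatrix {R : Type*} [CommRing R] (a b c d w w' z z' : R) :
    (!![a, 0, 0, w; 0, b, z, 0; 0, z', c, 0; w', 0, 0, d] : Matrix (Fin 4) (Fin 4) R).charpoly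
      = !![a, w; w', d].charpoly * !![b, z; z', c].charpoly := by
  let e : Fin 4 ≃ Fin 2 ⊕ Fin 2 :=
    { toFun := ![.inl 0, .inr 0, .inr 1, .inl 1]
      invFun := Sum.elim ![0, 3] ![1, 2]
      left_inv := by decide
      right_inv := by decide }
  have hblocks : reindex e e !![a, 0, 0, w; 0, b, z, 0; 0, z', c, 0; w', 0, 0, d]
      = fromBlocks !![a, w; w', d] 0 0 !![b, z; z', c] := by
    ext (i | i) (j | j) <;> fin_cases i <;> fin_cases j <;> rfl
  rw [← charpoly_reindex e, hblocks, charpoly_fromBlocks_zero₁₂]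

theorem charpoly_scalar_fin_two {R : Type*} [CommRing R] [Nontrivial R] (c : R) :
    !![c, 0; 0, c].charpoly = (X - C c) ^ 2 := by
  rw [charpoly_fin_two, trace_fin_two_of, det_fin_two_of, mul_zero, sub_zero, C_add, C_mul]
  ring

theorem charpoly_fin_two_eq_mul_of_discrim {K : Type*} [Field K] [NeZero (2 : K)]
    (M : Matrix (Fin 2) (Fin 2) K) {s : K} (hs : discrim 1 (-M.trace) M.det = s ^ 2) :
    M.charpoly = (X - C ((M.trace + s) / 2)) * (X - C ((M.trace - s) / 2)) := by
  have vieta (r₁ r₂ : K) :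
      (X - C r₁) * (X - C r₂) = X ^ 2 - C (r₁ + r₂) * X + C (r₁ * r₂) := by
    simp only [C_add, C_mul]
    ring
  rw [vieta, M.charpoly_fin_two]
  congr 4
  · field_simp
    ring
  · rw [discrim] at hs
    field_simp
    linear_combination -hs

end Matrix

open Real

theorem Real.one_sub_four_mul_exp_add_exp_add_mul_cosh (x t : ℝ) :
    1 - 4 * exp (2 * x) + exp (4 * x) + 2 * exp (2 * x) * cosh (2 * t)
      = (exp (2 * x) - 1) ^ 2 + 4 * exp (2 * x) * sinh t ^ 2 := by
  have h4 : exp (4 * x) = exp (2 * x) ^ 2 := by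
    rw [← exp_nat_mul]
    ring_nf
  rw [h4, cosh_two_mul, cosh_sq]
  ring

/-- The block of `ρTB β B α` on span{|00⟩, |11⟩}, with `Z` the partition function,
`x = βB` and `t = βα`. -/
abbrev ρTBOuterBlock (Z x t : ℝ) : Matrix (Fin 2) (Fin 2) ℝ :=
  !![Z⁻¹ * exp (-x), Z⁻¹ * -sinh t; Z⁻¹ * -sinh t, Z⁻¹ * exp x]

theorem trace_ρTBOuterBlock (Z x t : ℝ) :
    (ρTBOuterBlock Z x t).trace = (1 + exp (2 * x)) / (Z * exp x) := by
  rw [ρTBOuterBlock, Matrix.trace_fin_two_of, exp_neg, two_mul, exp_add]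
  field_simp

theorem discrim_ρTBOuterBlock (Z x t : ℝ) :
    discrim 1 (-(ρTBOuterBlock Z x t).trace) (ρTBOuterBlock Z x t).det
      = (√(1 - 4 * exp (2 * x) + exp (4 * x) + 2 * exp (2 * x) * cosh (2 * t))
          / (Z * exp x)) ^ 2 := by
  rw [one_sub_four_mul_exp_add_exp_add_mul_cosh, div_pow, sq_sqrt (by positivity),
    trace_ρTBOuterBlock, ρTBOuterBlock, Matrix.det_fin_two_of, discrim, exp_neg, two_mul, exp_add]
  field_simp
  ring

theorem eigenvalues_of_partial_transpose_general (β B α : ℝ) :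
    let Z : ℝ := 2 * (Real.cosh (β * α) + Real.cosh (β * B))
    let lam1 : ℝ := Real.cosh (β * α) / Z
    let R : ℝ := Real.sqrt (1 - 4 * Real.exp (2 * β * B) + Real.exp (4 * β * B)
      + 2 * Real.exp (2 * β * B) * Real.cosh (2 * β * α))
    let lamP : ℝ := (1 + Real.exp (2 * β * B) + R) / (2 * Z * Real.exp (β * B))
    let lamM : ℝ := (1 + Real.exp (2 * β * B) - R) / (2 * Z * Real.exp (β * B))
    (ρTB β B α).charpoly
      = (X - C (lam1 : ℂ)) ^ 2 * (X - C (lamP : ℂ)) * (X - C (lamM : ℂ)) := by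
  intro Z lam1 R lamP lamM
  have hρ : ρTB β B α = (!![Z⁻¹ * exp (-(β * B)), 0, 0, Z⁻¹ * -sinh (β * α);
      0, Z⁻¹ * cosh (β * α), 0, 0; 0, 0, Z⁻¹ * cosh (β * α), 0;
      Z⁻¹ * -sinh (β * α), 0, 0, Z⁻¹ * exp (β * B)]).map Complex.ofRealHom := by
    ext i j
    fin_cases i <;> fin_cases j <;> simp [ρTB, Z]
  have hR : R = √(1 - 4 * exp (2 * (β * B)) + exp (4 * (β * B))
      + 2 * exp (2 * (β * B)) * cosh (2 * (β * α))) := by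
    simp only [R, mul_assoc]
  have hlam1 : lam1 = Z⁻¹ * cosh (β * α) := div_eq_inv_mul ..
  have hlamP : lamP = ((1 + exp (2 * (β * B))) / (Z * exp (β * B))
      + R / (Z * exp (β * B))) / 2 := by
    simp only [lamP, mul_assoc]
    ring_nf
  have hlamM : lamM = ((1 + exp (2 * (β * B))) / (Z * exp (β * B))
      - R / (Z * exp (β * B))) / 2 := by
    simp only [lamM, mul_assoc]
    ring_nf
  rw [hρ, Matrix.charpoly_map, Matrix.charpoly_xMatrix, Matrix.charpoly_scalar_fin_two,
    Matrix.charpoly_fin_two_eq_mul_of_discrim (ρTBOuterBlock Z (β * B) (β * α))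
      (discrim_ρTBOuterBlock ..), trace_ρTBOuterBlock, ← hR, hlam1, hlamP, hlamM]
  simp only [Polynomial.map_mul, Polynomial.map_pow, Polynomial.map_sub, map_X, map_C,
    Complex.ofRealHom_eq_coe]
  ring

/-- The eigenvalues of ρ^{T_B} are cosh(βα)/Z (with multiplicity 2) and
    (1 + e^{2βB} ± √(1 - 4e^{2βB} + e^{4βB} + 2e^{2βB}cosh(2βα)))/(2Z e^{βB}). -/
theorem eigenvalues_of_partial_transpose (β B α : ℝ) (hβ : 0 < β) :
    let Z : ℝ := 2 * (Real.cosh (β * α) + Real.cosh (β * B))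
    let lam1 : ℝ := Real.cosh (β * α) / Z
    let R : ℝ := Real.sqrt (1 - 4 * Real.exp (2 * β * B) + Real.exp (4 * β * B)
      + 2 * Real.exp (2 * β * B) * Real.cosh (2 * β * α))
    let lamP : ℝ := (1 + Real.exp (2 * β * B) + R) / (2 * Z * Real.exp (β * B))
    let lamM : ℝ := (1 + Real.exp (2 * β * B) - R) / (2 * Z * Real.exp (β * B))
    (ρTB β B α).charpoly
      = (X - C (lam1 : ℂ)) ^ 2 * (X - C (lamP : ℂ)) * (X - C (lamM : ℂ)) :=
  eigenvalues_of_partial_transpose_general β B α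

end
end

section
/- The smallest eigenvalue λ₋ = (1 + e^{2βB} − √(1 − 4e^{2βB} + e^{4βB} + 2e^{2βB}cosh(2βα)))/(2Z e^{βB}) of the partial transpose of the two-qubit thermal state is negative if and only if βα > (1/2)·arcosh(3), equivalently if and only if the temperature T = 1/β satisfies T < α/ln(1+√2). -/
noncomputable section

/-- Inverse hyperbolic cosine. -/
def arcosh (x : ℝ) : ℝ := Real.log (x + Real.sqrt (x ^ 2 - 1))

lemma sqrt8 : Real.sqrt 8 = 2 * Real.sqrt 2 := by
  rw [show (8:ℝ) = 2^2 * 2 by norm_num, Real.sqrt_mul (by positivity),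
    Real.sqrt_sq (by norm_num)]

lemma arcosh3 : arcosh 3 = 2 * Real.log (1 + Real.sqrt 2) := by
  unfold arcosh
  rw [show (3:ℝ)^2 - 1 = 8 by norm_num, sqrt8,
    show (3:ℝ) + 2*Real.sqrt 2 = (1 + Real.sqrt 2)^2 by
      nlinarith [Real.sq_sqrt (by norm_num : (0:ℝ) ≤ 2)],
    Real.log_pow]
  push_cast; ring

lemma cosh_arcosh3 : Real.cosh (arcosh 3) = 3 := by
  unfold arcosh
  rw [show (3:ℝ)^2 - 1 = 8 by norm_num, Real.cosh_eq]
  have h8 : (0:ℝ) < 3 + Real.sqrt 8 := by positivity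
  rw [Real.exp_log h8, Real.exp_neg, Real.exp_log h8]
  have := Real.sq_sqrt (by norm_num : (0:ℝ) ≤ 8)
  have h8' : Real.sqrt 8 ≥ 0 := Real.sqrt_nonneg 8
  field_simp
  nlinarith

/-- The smallest eigenvalue λ₋ of the partial transpose of the two-qubit thermal state is
    negative iff βα > arcosh(3)/2, equivalently iff T = 1/β < α/ln(1+√2). -/
theorem negative_eigenvalue_iff (β B α : ℝ) (hβ : 0 < β) (hα : 0 < α) :
    let Z : ℝ := 2 * (Real.cosh (β * α) + Real.cosh (β * B))
    let R : ℝ := Real.sqrt (1 - 4 * Real.exp (2 * β * B) + Real.exp (4 * β * B)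
      + 2 * Real.exp (2 * β * B) * Real.cosh (2 * β * α))
    let lamM : ℝ := (1 + Real.exp (2 * β * B) - R) / (2 * Z * Real.exp (β * B))
    (lamM < 0 ↔ β * α > arcosh 3 / 2) ∧
    (lamM < 0 ↔ 1 / β < α / Real.log (1 + Real.sqrt 2)) := by
  intro Z R lamM
  have hc1 := Real.one_le_cosh (β * α)
  have hc2 := Real.one_le_cosh (β * B)
  have hZpos : 0 < Z := by simp only [Z]; linarith
  have hden : 0 < 2 * Z * Real.exp (β * B) := by positivity
  have hE := Real.exp_pos (2 * β * B)
  have key : lamM < 0 ↔ arcosh 3 < 2 * (β * α) := by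
    have h1 : lamM < 0 ↔ 1 + Real.exp (2*β*B) - R < 0 := by
      simp only [lamM]
      rw [div_neg_iff]
      constructor
      · rintro (⟨_, h⟩ | ⟨h, _⟩) <;> linarith
      · intro h; right; exact ⟨h, hden⟩
    rw [h1, sub_neg, show R = Real.sqrt (1 - 4 * Real.exp (2 * β * B) + Real.exp (4 * β * B)
      + 2 * Real.exp (2 * β * B) * Real.cosh (2 * β * α)) from rfl,
      Real.lt_sqrt (by positivity)]
    have h3 : (1 + Real.exp (2*β*B))^2 < 1 - 4 * Real.exp (2 * β * B) + Real.exp (4 * β * B)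
        + 2 * Real.exp (2 * β * B) * Real.cosh (2 * β * α) ↔ 3 < Real.cosh (2 * β * α) := by
      have he : Real.exp (4 * β * B) = Real.exp (2*β*B) ^ 2 := by
        rw [← Real.exp_nat_mul]; ring_nf
      constructor <;> intro h <;> nlinarith
    rw [h3]
    nth_rewrite 1 [← cosh_arcosh3]
    rw [Real.cosh_lt_cosh, abs_of_nonneg (by
        rw [arcosh3]
        have := Real.log_nonneg (by nlinarith [Real.sqrt_nonneg 2] : (1:ℝ) ≤ 1 + Real.sqrt 2)
        linarith),
      abs_of_nonneg (by nlinarith : (0:ℝ) ≤ 2 * β * α),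
      show (2:ℝ) * β * α = 2 * (β * α) by ring]
  constructor
  · rw [key]; constructor <;> intro h <;> [linarith; linarith]
  · rw [key, arcosh3]
    have hL : 0 < Real.log (1 + Real.sqrt 2) := Real.log_pos (by nlinarith [Real.sqrt_pos.mpr (by norm_num : (0:ℝ) < 2)])
    rw [div_lt_div_iff₀ hβ hL]
    constructor <;> intro h <;> nlinarith

end
end
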